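/- Let n ≥ 2 and let S, t be positive integers with 2 ≤ t ≤ S ≤ nt. Let Q = (a_1,…,a_t) ∈ U(S,t,n) be a sequence on which the minimum of the continuant over U(S,t,n) is attained. Then at most one element of Q is different from both 1 and n; i.e., there is at most one index i with a_i ∉ {1, n}. -/

import Mathlib

/-!
Fix all entries of a sequence but two, `x` and `y`. The continuant is then a bilinear
polynomial `A x y + B x + C y + D` whose leading coefficient `A` is the product of the
continuants of the three remaining blocks, so `A > 0`. Hence
`f(x - 1, y + 1) + f(x + 1, y - 1) = 2 f(x, y) - 2A < 2 f(x, y)`, and one of the two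
exchanges strictly decreases the continuant. If `1 < x, y < n`, both exchanges stay in
`U(S,t,n)`, so a minimizer cannot have two such entries.
-/

/-- The continuant of a finite sequence of positive integers. -/
def contnt : List ℕ → ℕ
  | [] => 1
  | [a] => a
  | a :: b :: l => a * contnt (b :: l) + contnt l

/-- Membership in `U(S,t,n)`: length `t`, entries in `{1,…,n}`, sum `S`. -/
def inU (S t n : ℕ) (a : List ℕ) : Prop :=
  a.length = t ∧ a.sum = S ∧ ∀ y ∈ a, 1 ≤ y ∧ y ≤ n

theorem contnt_pos {l : List ℕ} (h : ∀ y ∈ l, 0 < y) : 0 < contnt l := by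
  induction l using contnt.induct with
  | case1 => simp [contnt]
  | case2 a => simpa [contnt] using h
  | case3 a b l ih _ =>
    have ha : 0 < a := h a (by simp)
    have hbl : 0 < contnt (b :: l) := ih fun y hy => h y (by simp [hy])
    exact Nat.add_pos_left (Nat.mul_pos ha hbl) _

theorem contnt_append_cons (L R : List ℕ) (x : ℕ) :
    contnt (L ++ x :: R) = x * (contnt L * contnt R) + contnt (L ++ 0 :: R) := by
  induction L using contnt.induct with
  | case1 => cases R <;> simp [contnt]
  | case2 a => cases R <;> simp [contnt] <;> ring
  | case3 a b l ih₁ ih₂ =>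
    simp only [List.cons_append, contnt] at ih₁ ⊢
    rw [ih₁, ih₂]
    ring

theorem contnt_append_cons_append_cons (L M R : List ℕ) (x y : ℕ) :
    contnt (L ++ x :: M ++ y :: R) =
      x * y * (contnt L * contnt M * contnt R) + x * (contnt L * contnt (M ++ 0 :: R)) +
        y * (contnt (L ++ 0 :: M) * contnt R) + contnt (L ++ 0 :: M ++ 0 :: R) := by
  simp only [List.append_assoc, List.cons_append]
  rw [contnt_append_cons L, contnt_append_cons M, ← List.cons_append, ← List.append_assoc,
    contnt_append_cons (L ++ 0 :: M)]
  simp only [List.append_assoc, List.cons_append]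
  ring

theorem contnt_exchange (L M R : List ℕ) (x y : ℕ) :
    contnt (L ++ x :: M ++ (y + 2) :: R) + contnt (L ++ (x + 2) :: M ++ y :: R) +
        2 * (contnt L * contnt M * contnt R) =
      2 * contnt (L ++ (x + 1) :: M ++ (y + 1) :: R) := by
  rw [contnt_append_cons_append_cons L M R x, contnt_append_cons_append_cons L M R (x + 2),
    contnt_append_cons_append_cons L M R (x + 1)]
  ring

theorem List.exists_eq_append_getElem_cons_append_getElem_cons {α : Type*} (l : List α)
    {i j : ℕ} (hij : i < j) (hj : j < l.length) :
    ∃ L M R, l = L ++ l[i] :: M ++ l[j] :: R := by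
  have hi : i < (l.take j).length := by simp [hij, hj.le]
  refine ⟨l.take i, (l.take j).drop (i + 1), l.drop (j + 1), ?_⟩
  have hl : l = l.take j ++ l[j] :: l.drop (j + 1) := by
    rw [← List.drop_eq_getElem_cons hj, List.take_append_drop]
  have hlj : l.take j = l.take i ++ l[i] :: (l.take j).drop (i + 1) := by
    conv_lhs => rw [← List.take_append_drop i (l.take j), List.drop_eq_getElem_cons hi]
    rw [List.take_take, min_eq_left hij.le, List.getElem_take]
  rw [hlj] at hl
  simpa using hl

theorem inU_exchange {S t n x y u v : ℕ} {L M R : List ℕ}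
    (hQ : inU S t n (L ++ x :: M ++ y :: R))
    (huv : u + v = x + y) (hu : 1 ≤ u ∧ u ≤ n) (hv : 1 ≤ v ∧ v ≤ n) :
    inU S t n (L ++ u :: M ++ v :: R) := by
  obtain ⟨hlen, hsum, hmem⟩ := hQ
  refine ⟨by simpa using hlen, ?_, ?_⟩
  · simp only [List.sum_append, List.sum_cons] at hsum ⊢
    omega
  · intro z hz
    simp only [List.mem_append, List.mem_cons] at hz hmem
    rcases hz with (hL | rfl | hM) | rfl | hR
    · exact hmem z (.inl (.inl hL))
    · exact hu
    · exact hmem z (.inl (.inr (.inr hM)))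
    · exact hv
    · exact hmem z (.inr (.inr hR))

theorem exists_inU_contnt_lt {S t n x y : ℕ} {L M R : List ℕ}
    (hQ : inU S t n (L ++ x :: M ++ y :: R)) (hx : 1 < x) (hxn : x < n) (hy : 1 < y)
    (hyn : y < n) : ∃ a, inU S t n a ∧ contnt a < contnt (L ++ x :: M ++ y :: R) := by
  have hmem : ∀ z, z ∈ L ∨ z ∈ M ∨ z ∈ R → 0 < z := fun z hz =>
    (hQ.2.2 z (by simp only [List.mem_append, List.mem_cons]; tauto)).1
  have hpos : 0 < contnt L * contnt M * contnt R :=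
    Nat.mul_pos (Nat.mul_pos (contnt_pos fun z hz => hmem z (by tauto))
      (contnt_pos fun z hz => hmem z (by tauto))) (contnt_pos fun z hz => hmem z (by tauto))
  obtain ⟨p, rfl⟩ : ∃ p, x = p + 1 := ⟨x - 1, by omega⟩
  obtain ⟨q, rfl⟩ : ∃ q, y = q + 1 := ⟨y - 1, by omega⟩
  have hexch := contnt_exchange L M R p q
  by_cases hlt : contnt (L ++ p :: M ++ (q + 2) :: R) < contnt (L ++ (p + 1) :: M ++ (q + 1) :: R)
  · exact ⟨_, inU_exchange (u := p) (v := q + 2) hQ (by omega) ⟨by omega, by omega⟩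
      ⟨by omega, by omega⟩, hlt⟩
  · exact ⟨_, inU_exchange (u := p + 2) (v := q) hQ (by omega) ⟨by omega, by omega⟩
      ⟨by omega, by omega⟩, by omega⟩

theorem stmt_16_general (n S t : ℕ)
    (Q : List ℕ) (hQ : inU S t n Q)
    (hmin : ∀ a : List ℕ, inU S t n a → contnt Q ≤ contnt a) :
    ∀ i j : Fin Q.length,
      Q.get i ≠ 1 → Q.get i ≠ n → Q.get j ≠ 1 → Q.get j ≠ n → i = j := by
  have not_two_inner : ∀ i j : Fin Q.length, i < j →
      Q.get i ≠ 1 → Q.get i ≠ n → Q.get j ≠ 1 → Q.get j ≠ n → False := by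
    intro i j hij hi1 hin hj1 hjn
    have hi := hQ.2.2 _ (List.getElem_mem i.isLt)
    have hj := hQ.2.2 _ (List.getElem_mem j.isLt)
    rw [List.get_eq_getElem] at hi1 hin hj1 hjn
    obtain ⟨L, M, R, hLMR⟩ := Q.exists_eq_append_getElem_cons_append_getElem_cons hij j.isLt
    rw [hLMR] at hQ hmin
    obtain ⟨a, ha, hlt⟩ := exists_inU_contnt_lt hQ (by omega) (by omega) (by omega) (by omega)
    exact (hmin a ha).not_gt hlt
  intro i j hi1 hin hj1 hjn
  rcases lt_trichotomy i j with hij | hij | hij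
  · exact (not_two_inner i j hij hi1 hin hj1 hjn).elim
  · exact hij
  · exact (not_two_inner j i hij hj1 hjn hi1 hin).elim

/-- Lemma 15: a sequence minimizing the continuant on `U(S,t,n)`
has at most one element different from both `1` and `n`. -/
theorem stmt_16 (n S t : ℕ) (hn : 2 ≤ n) (ht : 2 ≤ t) (htS : t ≤ S) (hSnt : S ≤ n * t)
    (Q : List ℕ) (hQ : inU S t n Q)
    (hmin : ∀ a : List ℕ, inU S t n a → contnt Q ≤ contnt a) :
    ∀ i j : Fin Q.length,
      Q.get i ≠ 1 → Q.get i ≠ n → Q.get j ≠ 1 → Q.get j ≠ n → i = j :=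
  stmt_16_general n S t Q hQ hmin
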